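/- For every n ≥ 1 there exist rational numbers a₁,…,a_n, independent of k, such that for all k ≥ 0 the number of k-Rvalid vectors of size n equals Σ_{i=1}^{n} a_i·(i^i)^k. -/

import Mathlib

open Finset

/-- `Π·h`: the vector whose `q`-th entry is the union of the `Π p` over all `p` with `h p = q`. -/
def dotAct {n : ℕ} (Pi : Fin n → Finset ℕ) (h : Fin n → Fin n) : Fin n → Finset ℕ :=
  fun q => (Finset.univ.filter (fun p => h p = q)).biUnion Pi

/-- Entrywise union of two vectors of sets. -/
def vUnion {n : ℕ} (Pi Pi' : Fin n → Finset ℕ) : Fin n → Finset ℕ :=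
  fun q => Pi q ∪ Pi' q

/-- `r = max (π₀ ∪ … ∪ π_{n−1})`. -/
def vMax {n : ℕ} (Pi : Fin n → Finset ℕ) : ℕ :=
  (Finset.univ.sup Pi).sup id

/-- `Π↑`: add `r = max (π₀ ∪ … ∪ π_{n−1})` to every element of every entry. -/
def vUp {n : ℕ} (Pi : Fin n → Finset ℕ) : Fin n → Finset ℕ :=
  fun q => (Pi q).image (· + vMax Pi)

/-- A `k`-EXPcomposition of size `n`: pairwise disjoint entries whose union is `{1,…,2^k}`. -/
def IsEXP {n : ℕ} (k : ℕ) (Pi : Fin n → Finset ℕ) : Prop :=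
  (∀ p q : Fin n, p ≠ q → Disjoint (Pi p) (Pi q)) ∧
    Finset.univ.sup Pi = Finset.Icc 1 (2 ^ k)

/-- A `k`-Rvalid vector of size `n`. -/
def IsRvalid {n : ℕ} (k : ℕ) (ρ : Fin n → Finset ℕ) : Prop :=
  IsEXP k ρ ∧ (∀ p : Fin n, p.val = 0 → 1 ∈ ρ p) ∧
    ∀ k' < k, ∀ i ∈ Finset.Icc 1 (2 ^ k'), ∀ j ∈ Finset.Icc 1 (2 ^ k'),
      (∃ α, i ∈ ρ α ∧ j ∈ ρ α) → ∃ β, i + 2 ^ k' ∈ ρ β ∧ j + 2 ^ k' ∈ ρ β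

/-- A `k`-Lvalid vector of size `m`. -/
def IsLvalid {m : ℕ} (k : ℕ) (lam : Fin m → Finset ℕ) : Prop :=
  IsEXP k lam ∧ (∀ p : Fin m, p.val = 0 → 2 ^ k ∈ lam p) ∧
    ∀ k' < k, ∀ i ∈ Finset.Icc 1 (2 ^ k'), ∀ j ∈ Finset.Icc 1 (2 ^ k'),
      (∃ α, 2 ^ k + 1 - i ∈ lam α ∧ 2 ^ k + 1 - j ∈ lam α) →
        ∃ β, 2 ^ k + 1 - (i + 2 ^ k') ∈ lam β ∧ 2 ^ k + 1 - (j + 2 ^ k') ∈ lam β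

/-- Number of nonempty entries of a vector of sets. -/
def nne {n : ℕ} (Pi : Fin n → Finset ℕ) : ℕ :=
  (Finset.univ.filter (fun q => Pi q ≠ ∅)).card

/-- `succ(P) = {P ∪ (P·g)↑ : g}`. -/
def succSet {n : ℕ} (P : Fin n → Finset ℕ) : Finset (Fin n → Finset ℕ) :=
  (Finset.univ : Finset (Fin n → Fin n)).image (fun g => vUnion P (vUp (dotAct P g)))

/-- The graded set `U_{m,n}^{(k)}` of U-pairs. -/
def Uset (m n : ℕ) : ℕ → Set ((Fin m → Finset ℕ) × (Fin n → Finset ℕ))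
  | 0 => {x | x = (fun p => if p.val = 0 then {1} else ∅,
                   fun q => if q.val = 0 then {1} else ∅)}
  | k + 1 => {x | ∃ L P, (L, P) ∈ Uset m n k ∧ ∃ (f : Fin m → Fin m) (g : Fin n → Fin n),
      x = (vUnion (dotAct L f) (vUp L), vUnion P (vUp (dotAct P g)))}

/-- The `r`-Stirling number: partitions of `{1,…,a}` into `b` nonempty blocks
with `1,…,r` in pairwise distinct blocks. -/
noncomputable def rStirling (a b r : ℕ) : ℕ :=
  Set.ncard {C : Finset (Finset ℕ) |
    C.card = b ∧ (∅ ∉ C) ∧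
    (∀ B ∈ C, ∀ B' ∈ C, B ≠ B' → Disjoint B B') ∧
    C.sup id = Finset.Icc 1 a ∧
    ∀ x ∈ Finset.Icc 1 r, ∀ y ∈ Finset.Icc 1 r, x ≠ y →
      ∀ B ∈ C, x ∈ B → y ∉ B}

/-- The Stirling number of the second kind: the number of partitions of an
`a`-element set into `b` nonempty blocks. -/
noncomputable def stirling2 (a b : ℕ) : ℕ := rStirling a b 0

/-- The entry `s_n^{(i,j)}` (with `1 ≤ i,j ≤ n`). -/
noncomputable def sEntry (n i j : ℕ) : ℕ :=
  if i ≤ j then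
    (j - i).factorial * Nat.choose (n - i) (j - i) *
      ∑ α ∈ Finset.Icc (j - i) i, Nat.choose i α * i ^ (i - α) * stirling2 α (j - i)
  else 0

/-- The matrix `S_n`, with rows and columns indexed by `{1,…,n}`. -/
noncomputable def Smat (n : ℕ) : Matrix (Fin n) (Fin n) ℕ :=
  fun i j => sEntry n (i.val + 1) (j.val + 1)

/-- One step of the shuffle-automaton action on subsets of the grid. -/
def stepE {m n : ℕ} (E : Finset (Fin m × Fin n)) (f : Fin m → Fin m) (g : Fin n → Fin n) :
    Finset (Fin m × Fin n) :=
  E.image (fun p => (f p.1, p.2)) ∪ E.image (fun p => (p.1, g p.2))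

/-- Reachability from `{(0,0)}` by finitely many steps. -/
def Reach {m n : ℕ} (hm : 0 < m) (hn : 0 < n) (E : Finset (Fin m × Fin n)) : Prop :=
  Relation.ReflTransGen (fun E1 E2 => ∃ f g, E2 = stepE E1 f g)
    {(⟨0, hm⟩, ⟨0, hn⟩)} E

/-- Reachability from `{(0,0)}` in at most `t` steps. -/
def ReachIn {m n : ℕ} (hm : 0 < m) (hn : 0 < n) :
    ℕ → Finset (Fin m × Fin n) → Prop
  | 0, E => E = {(⟨0, hm⟩, ⟨0, hn⟩)}
  | t + 1, E => ReachIn hm hn t E ∨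
      ∃ E' f g, ReachIn hm hn t E' ∧ E = stepE E' f g

/-- `s(Λ,P) = {(i,j) : λ_i ∩ ρ_j ≠ ∅}`. -/
def sTab {m n : ℕ} (L : Fin m → Finset ℕ) (P : Fin n → Finset ℕ) :
    Finset (Fin m × Fin n) :=
  Finset.univ.filter (fun p => (L p.1 ∩ P p.2).Nonempty)


/-!
A `(k+1)`-Rvalid vector is exactly `Π ∪ (Π·g)↑` for a `k`-Rvalid `Π`, namely its restriction to
`{1,…,2^k}`, and a map `g : Fin n → Fin n` that matters only on the occupied slots of `Π`.
Counting Rvalid vectors by their set `S` of occupied slots therefore gives a linear recurrence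
in `k` that is triangular with respect to inclusion, with diagonal coefficient `|S|^|S|` (the
self-maps of `S`). As `i ↦ i^i` is injective on `i ≥ 1`, induction on `S` shows that each count
is a combination of the sequences `(i^i)^k` with `1 ≤ i ≤ |S|`.
-/
section GeomComb

variable {ι K : Type*} [Field K] {r : ι → K} {s t : Finset ι}

def IsGeomComb (r : ι → K) (s : Finset ι) (c : ℕ → K) : Prop :=
  ∃ a : ι → K, ∀ k, c k = ∑ i ∈ s, a i * r i ^ k

theorem IsGeomComb.mono {c : ℕ → K} (hc : IsGeomComb r s c) (hst : s ⊆ t) :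
    IsGeomComb r t c := by
  classical
  obtain ⟨a, ha⟩ := hc
  refine ⟨fun i => if i ∈ s then a i else 0, fun k => ?_⟩
  simp only [ite_mul, zero_mul, sum_ite_mem, inter_eq_right.2 hst, ha]

theorem IsGeomComb.const_mul {c : ℕ → K} (hc : IsGeomComb r s c) (b : K) :
    IsGeomComb r s (fun k => b * c k) := by
  obtain ⟨a, ha⟩ := hc
  exact ⟨fun i => b * a i, fun k => by simp only [ha, mul_sum, mul_assoc]⟩

theorem IsGeomComb.sum {α : Type*} (T : Finset α) {c : α → ℕ → K}
    (hc : ∀ j ∈ T, IsGeomComb r s (c j)) : IsGeomComb r s (fun k => ∑ j ∈ T, c j k) := by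
  choose! a ha using hc
  refine ⟨fun i => ∑ j ∈ T, a j i, fun k => ?_⟩
  show ∑ j ∈ T, c j k = ∑ i ∈ s, (∑ j ∈ T, a j i) * r i ^ k
  rw [sum_congr rfl fun j hj => ha j hj k, sum_comm]
  simp only [sum_mul]

theorem IsGeomComb.of_rec [DecidableEq ι] {m : ι} {c d : ℕ → K} (hr : ∀ i ∈ s, r i ≠ r m)
    (hd : IsGeomComb r s d) (hc : ∀ k, c (k + 1) = r m * c k + d k) :
    IsGeomComb r (insert m s) c := by
  obtain ⟨b, hb⟩ := hd
  have hm : m ∉ s := fun h => hr m h rfl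
  set β : ι → K := fun i => b i / (r i - r m)
  set A := c 0 - ∑ i ∈ s, β i
  have hβ : ∀ i ∈ s, β i * r i = r m * β i + b i := fun i hi => by
    have := sub_ne_zero.2 (hr i hi)
    simp only [β]
    field_simp
    ring
  suffices h : ∀ k, c k = A * r m ^ k + ∑ i ∈ s, β i * r i ^ k by
    refine ⟨Function.update β m A, fun k => ?_⟩
    rw [sum_insert hm, Function.update_self, h k]
    congr 1
    exact sum_congr rfl fun i hi => by rw [Function.update_of_ne (ne_of_mem_of_not_mem hi hm)]
  intro k
  induction k with
  | zero => simp [A]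
  | succ k ih =>
    have hstep : ∑ i ∈ s, β i * r i ^ (k + 1) =
        r m * ∑ i ∈ s, β i * r i ^ k + ∑ i ∈ s, b i * r i ^ k := by
      rw [mul_sum, ← sum_add_distrib]
      exact sum_congr rfl fun i hi => by linear_combination r i ^ k * hβ i hi
    rw [hc, ih, hstep, hb k]
    ring

end GeomComb

section EXPcomposition

variable {n k : ℕ} {P Q ρ : Fin n → Finset ℕ}

theorem IsEXP.mem_Icc (h : IsEXP k P) {q : Fin n} {x : ℕ} (hx : x ∈ P q) :
    x ∈ Icc 1 (2 ^ k) := by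
  rw [← h.2, mem_sup]
  exact ⟨q, mem_univ q, hx⟩

theorem IsEXP.exists_mem (h : IsEXP k P) {x : ℕ} (hx : x ∈ Icc 1 (2 ^ k)) : ∃ q, x ∈ P q := by
  rw [← h.2, mem_sup] at hx
  obtain ⟨q, -, hq⟩ := hx
  exact ⟨q, hq⟩

theorem IsEXP.eq_of_mem (h : IsEXP k P) {q q' : Fin n} {x : ℕ} (hx : x ∈ P q)
    (hx' : x ∈ P q') : q = q' := by
  by_contra hne
  exact disjoint_left.1 (h.1 q q' hne) hx hx'

theorem IsEXP.ext (hP : IsEXP k P) (hQ : IsEXP k Q) (h : ∀ q x, x ∈ P q → x ∈ Q q) :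
    P = Q := by
  funext q
  refine Subset.antisymm (fun x => h q x) fun x hx => ?_
  obtain ⟨q', hq'⟩ := hP.exists_mem (hQ.mem_Icc hx)
  rwa [hQ.eq_of_mem hx (h q' x hq')]

theorem mem_dotAct {g : Fin n → Fin n} {q : Fin n} {x : ℕ} :
    x ∈ dotAct P g q ↔ ∃ p, g p = q ∧ x ∈ P p := by
  simp only [dotAct, mem_biUnion, mem_filter, mem_univ, true_and]

theorem sup_dotAct (P : Fin n → Finset ℕ) (g : Fin n → Fin n) :
    univ.sup (dotAct P g) = univ.sup P := by
  ext x
  simp only [mem_sup, mem_univ, true_and, mem_dotAct]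
  exact ⟨fun ⟨_, p, _, hp⟩ => ⟨p, hp⟩, fun ⟨p, hp⟩ => ⟨g p, p, rfl, hp⟩⟩

theorem IsEXP.vMax_dotAct (h : IsEXP k P) (g : Fin n → Fin n) : vMax (dotAct P g) = 2 ^ k := by
  rw [vMax, sup_dotAct, h.2]
  exact le_antisymm (Finset.sup_le fun x hx => (Finset.mem_Icc.1 hx).2)
    (le_sup (f := id) (Finset.mem_Icc.2 ⟨Nat.one_le_two_pow, le_rfl⟩))

def succVec (P : Fin n → Finset ℕ) (g : Fin n → Fin n) : Fin n → Finset ℕ :=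
  vUnion P (vUp (dotAct P g))

theorem mem_succVec (h : IsEXP k P) {g : Fin n → Fin n} {q : Fin n} {x : ℕ} :
    x ∈ succVec P g q ↔ x ∈ P q ∨ ∃ p, g p = q ∧ ∃ y ∈ P p, x = y + 2 ^ k := by
  simp only [succVec, vUnion, vUp, h.vMax_dotAct g, mem_union, mem_image, mem_dotAct]
  constructor
  · rintro (hx | ⟨y, ⟨p, hgp, hy⟩, rfl⟩)
    exacts [Or.inl hx, Or.inr ⟨p, hgp, y, hy, rfl⟩]
  · rintro (hx | ⟨p, hgp, y, hy, rfl⟩)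
    exacts [Or.inl hx, Or.inr ⟨y, ⟨p, hgp, hy⟩, rfl⟩]

theorem IsEXP.succVec (h : IsEXP k P) (g : Fin n → Fin n) : IsEXP (k + 1) (succVec P g) := by
  have hbound : ∀ {q x}, x ∈ P q → 1 ≤ x ∧ x ≤ 2 ^ k := fun hx => Finset.mem_Icc.1 (h.mem_Icc hx)
  have h2 : 2 ^ (k + 1) = 2 ^ k + 2 ^ k := by ring
  constructor
  · intro q q' hne
    refine disjoint_left.2 fun x hx hx' => ?_
    rcases (mem_succVec h).1 hx with hx | ⟨p, rfl, y, hy, rfl⟩ <;>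
      rcases (mem_succVec h).1 hx' with hx' | ⟨p', rfl, y', hy', hyy'⟩
    · exact hne (h.eq_of_mem hx hx')
    · have := (hbound hx).2; have := (hbound hy').1; omega
    · have := (hbound hx').2; have := (hbound hy).1; omega
    · obtain rfl : y = y' := by omega
      exact hne (congrArg g (h.eq_of_mem hy hy'))
  · ext x
    simp only [mem_sup, mem_univ, true_and, Finset.mem_Icc]
    constructor
    · rintro ⟨q, hq⟩
      rcases (mem_succVec h).1 hq with hx | ⟨p, -, y, hy, rfl⟩
      · have := hbound hx; omega
      · have := hbound hy; omega
    · rintro ⟨hx1, hx2⟩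
      by_cases hx : x ≤ 2 ^ k
      · obtain ⟨q, hq⟩ := h.exists_mem (Finset.mem_Icc.2 ⟨hx1, hx⟩)
        exact ⟨q, (mem_succVec h).2 (Or.inl hq)⟩
      · obtain ⟨p, hp⟩ := h.exists_mem (x := x - 2 ^ k) (Finset.mem_Icc.2 (by omega))
        exact ⟨g p, (mem_succVec h).2 (Or.inr ⟨p, rfl, x - 2 ^ k, hp, by omega⟩)⟩

def lowerHalf (k : ℕ) (ρ : Fin n → Finset ℕ) : Fin n → Finset ℕ :=
  fun q => (ρ q).filter (· ≤ 2 ^ k)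

theorem mem_lowerHalf {q : Fin n} {x : ℕ} : x ∈ lowerHalf k ρ q ↔ x ∈ ρ q ∧ x ≤ 2 ^ k :=
  mem_filter

theorem IsEXP.lowerHalf (h : IsEXP (k + 1) ρ) : IsEXP k (lowerHalf k ρ) := by
  refine ⟨fun p q hne => (h.1 p q hne).mono (filter_subset _ _) (filter_subset _ _), ?_⟩
  ext x
  simp only [mem_sup, mem_univ, true_and, mem_lowerHalf]
  constructor
  · rintro ⟨q, hq, hx⟩
    exact Finset.mem_Icc.2 ⟨(Finset.mem_Icc.1 (h.mem_Icc hq)).1, hx⟩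
  · intro hx
    have hx' := Finset.mem_Icc.1 hx
    obtain ⟨q, hq⟩ := h.exists_mem
      (Finset.mem_Icc.2 ⟨hx'.1, hx'.2.trans (Nat.pow_le_pow_right two_pos k.le_succ)⟩)
    exact ⟨q, hq, hx'.2⟩

theorem lowerHalf_succVec (h : IsEXP k P) (g : Fin n → Fin n) :
    lowerHalf k (succVec P g) = P :=
  ((h.succVec g).lowerHalf.ext h fun _ _ hx => by
    rcases (mem_succVec h).1 (mem_lowerHalf.1 hx).1 with hx' | ⟨p, -, y, hy, rfl⟩
    · exact hx'
    · have := (Finset.mem_Icc.1 (h.mem_Icc hy)).1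
      have := (mem_lowerHalf.1 hx).2
      omega)

theorem mem_succVec_of_le (h : IsEXP k P) {g : Fin n → Fin n} {q : Fin n} {x : ℕ}
    (hx : x ≤ 2 ^ k) : x ∈ succVec P g q ↔ x ∈ P q := by
  conv_rhs => rw [← lowerHalf_succVec h g]
  simp [mem_lowerHalf, hx]

end EXPcomposition

section Rvalid

variable {n k : ℕ} {P ρ : Fin n → Finset ℕ}

theorem IsRvalid.succVec (hP : IsRvalid k P) (g : Fin n → Fin n) :
    IsRvalid (k + 1) (succVec P g) := by
  obtain ⟨hE, h1, hcl⟩ := hP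
  refine ⟨hE.succVec g, fun p hp => (mem_succVec hE).2 (Or.inl (h1 p hp)), ?_⟩
  rintro k' hk' i hi j hj ⟨α, hiα, hjα⟩
  have hi' := Finset.mem_Icc.1 hi
  have hj' := Finset.mem_Icc.1 hj
  have hk'k : 2 ^ k' ≤ 2 ^ k := Nat.pow_le_pow_right two_pos (Nat.le_of_lt_succ hk')
  rw [mem_succVec_of_le hE (by omega)] at hiα hjα
  rcases (Nat.le_of_lt_succ hk').lt_or_eq with hlt | rfl
  · obtain ⟨β, hiβ, hjβ⟩ := hcl k' hlt i hi j hj ⟨α, hiα, hjα⟩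
    have : 2 ^ (k' + 1) ≤ 2 ^ k := Nat.pow_le_pow_right two_pos hlt
    have : 2 ^ (k' + 1) = 2 ^ k' + 2 ^ k' := by ring
    exact ⟨β, (mem_succVec_of_le hE (by omega)).2 hiβ, (mem_succVec_of_le hE (by omega)).2 hjβ⟩
  · exact ⟨g α, (mem_succVec hE).2 (Or.inr ⟨α, rfl, i, hiα, rfl⟩),
      (mem_succVec hE).2 (Or.inr ⟨α, rfl, j, hjα, rfl⟩)⟩

theorem IsRvalid.lowerHalf (hρ : IsRvalid (k + 1) ρ) : IsRvalid k (lowerHalf k ρ) := by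
  obtain ⟨hE, h1, hcl⟩ := hρ
  refine ⟨hE.lowerHalf, fun p hp => mem_lowerHalf.2 ⟨h1 p hp, Nat.one_le_two_pow⟩, ?_⟩
  rintro k' hk' i hi j hj ⟨α, hiα, hjα⟩
  obtain ⟨β, hiβ, hjβ⟩ := hcl k' (by omega) i hi j hj
    ⟨α, (mem_lowerHalf.1 hiα).1, (mem_lowerHalf.1 hjα).1⟩
  have hi' := Finset.mem_Icc.1 hi
  have hj' := Finset.mem_Icc.1 hj
  have : 2 ^ (k' + 1) ≤ 2 ^ k := Nat.pow_le_pow_right two_pos hk'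
  have : 2 ^ (k' + 1) = 2 ^ k' + 2 ^ k' := by ring
  exact ⟨β, mem_lowerHalf.2 ⟨hiβ, by omega⟩, mem_lowerHalf.2 ⟨hjβ, by omega⟩⟩

theorem IsRvalid.exists_shift (hρ : IsRvalid (k + 1) ρ) :
    ∃ g : Fin n → Fin n, ∀ p y, y ∈ ρ p → y ≤ 2 ^ k → y + 2 ^ k ∈ ρ (g p) := by
  obtain ⟨hE, -, hcl⟩ := hρ
  suffices h : ∀ p, ∃ β, ∀ y, y ∈ ρ p → y ≤ 2 ^ k → y + 2 ^ k ∈ ρ β by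
    choose g hg using h
    exact ⟨g, hg⟩
  intro p
  by_cases hp : ∃ y₀ ∈ ρ p, y₀ ≤ 2 ^ k
  · obtain ⟨y₀, hy₀, hy₀k⟩ := hp
    have hIcc : ∀ {y}, y ∈ ρ p → y ≤ 2 ^ k → y ∈ Icc 1 (2 ^ k) := fun hy hyk =>
      Finset.mem_Icc.2 ⟨(Finset.mem_Icc.1 (hE.mem_Icc hy)).1, hyk⟩
    obtain ⟨β, hβ⟩ := hE.exists_mem (x := y₀ + 2 ^ k)
      (Finset.mem_Icc.2 ⟨Nat.one_le_two_pow.trans (Nat.le_add_left _ _), by rw [pow_succ]; omega⟩)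
    refine ⟨β, fun y hy hyk => ?_⟩
    obtain ⟨β', hy₀β', hyβ'⟩ := hcl k k.lt_succ_self y₀ (hIcc hy₀ hy₀k) y (hIcc hy hyk)
      ⟨p, hy₀, hy⟩
    rwa [hE.eq_of_mem hβ hy₀β']
  · push Not at hp
    exact ⟨p, fun y hy hyk => absurd hyk (hp y hy).not_ge⟩

theorem eq_succVec_lowerHalf (hρ : IsEXP (k + 1) ρ) {g : Fin n → Fin n}
    (hg : ∀ p y, y ∈ ρ p → y ≤ 2 ^ k → y + 2 ^ k ∈ ρ (g p)) :
    ρ = succVec (lowerHalf k ρ) g :=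
  (hρ.lowerHalf.succVec g |>.ext hρ fun q x hx => by
    rcases (mem_succVec hρ.lowerHalf).1 hx with hx | ⟨p, rfl, y, hy, rfl⟩
    · exact (mem_lowerHalf.1 hx).1
    · exact hg p y (mem_lowerHalf.1 hy).1 (mem_lowerHalf.1 hy).2).symm

theorem isRvalid_succ_iff :
    IsRvalid (k + 1) ρ ↔ ∃ P, IsRvalid k P ∧ ∃ g, succVec P g = ρ := by
  constructor
  · intro hρ
    obtain ⟨g, hg⟩ := hρ.exists_shift
    exact ⟨lowerHalf k ρ, hρ.lowerHalf, g, (eq_succVec_lowerHalf hρ.1 hg).symm⟩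
  · rintro ⟨P, hP, g, rfl⟩
    exact hP.succVec g

def rvalidZero (n : ℕ) : Fin n → Finset ℕ := fun q => if q.val = 0 then {1} else ∅

theorem isRvalid_zero_iff (hn : 1 ≤ n) : IsRvalid 0 ρ ↔ ρ = rvalidZero n := by
  have hEXP : IsEXP 0 (rvalidZero n) := by
    refine ⟨fun p q hne => ?_, ?_⟩
    · simp only [rvalidZero]
      split_ifs with hp hq <;> simp_all [Fin.ext_iff]
    · ext x
      simp only [mem_sup, mem_univ, true_and, rvalidZero, pow_zero, Icc_self]
      exact ⟨fun ⟨q, hq⟩ => by split_ifs at hq <;> simp_all,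
        fun hx => ⟨⟨0, hn⟩, by simpa using hx⟩⟩
  constructor
  · rintro ⟨hE, h1, -⟩
    refine (hEXP.ext hE fun q x hx => ?_).symm
    simp only [rvalidZero] at hx
    split_ifs at hx with hq
    · rw [mem_singleton.1 hx]
      exact h1 q hq
    · simp at hx
  · rintro rfl
    exact ⟨hEXP, fun p hp => by simp [rvalidZero, hp], fun k' hk' => absurd hk' k'.not_lt_zero⟩

end Rvalid

section Counting

variable {n k : ℕ} {P Q ρ : Fin n → Finset ℕ}

def rvalidFinset (n : ℕ) : ℕ → Finset (Fin n → Finset ℕ)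
  | 0 => {rvalidZero n}
  | k + 1 => (rvalidFinset n k).biUnion succSet

theorem mem_succSet : ρ ∈ succSet P ↔ ∃ g, succVec P g = ρ := by
  simp [succSet, succVec]

theorem mem_rvalidFinset (hn : 1 ≤ n) : ∀ {k ρ}, ρ ∈ rvalidFinset n k ↔ IsRvalid k ρ
  | 0 => by rw [rvalidFinset, mem_singleton, isRvalid_zero_iff hn]
  | k + 1 => by
    simp only [rvalidFinset, mem_biUnion, mem_succSet, isRvalid_succ_iff,
      mem_rvalidFinset hn]

def occupied (ρ : Fin n → Finset ℕ) : Finset (Fin n) :=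
  univ.filter fun q => (ρ q).Nonempty

theorem occupied_succVec (h : IsEXP k P) (g : Fin n → Fin n) :
    occupied (succVec P g) = occupied P ∪ (occupied P).image g := by
  ext q
  simp only [occupied, mem_filter, mem_univ, true_and, mem_union, mem_image]
  constructor
  · rintro ⟨x, hx⟩
    rcases (mem_succVec h).1 hx with hx | ⟨p, hgp, y, hy, -⟩
    exacts [Or.inl ⟨x, hx⟩, Or.inr ⟨p, ⟨y, hy⟩, hgp⟩]
  · rintro (⟨x, hx⟩ | ⟨p, ⟨y, hy⟩, rfl⟩)
    exacts [⟨x, (mem_succVec h).2 (Or.inl hx)⟩,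
      ⟨y + 2 ^ k, (mem_succVec h).2 (Or.inr ⟨p, rfl, y, hy, rfl⟩)⟩]

theorem succSet_disjoint (hP : IsEXP k P) (hQ : IsEXP k Q) (hne : P ≠ Q) :
    Disjoint (succSet P) (succSet Q) := by
  refine disjoint_left.2 fun ρ hρP hρQ => hne ?_
  obtain ⟨g, rfl⟩ := mem_succSet.1 hρP
  obtain ⟨g', hgg'⟩ := mem_succSet.1 hρQ
  rw [← lowerHalf_succVec hP g, ← hgg', lowerHalf_succVec hQ g']

def mapsFixingOutside (S : Finset (Fin n)) : Finset (Fin n → Fin n) :=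
  univ.filter fun g => ∀ p ∉ S, g p = p

theorem succVec_congr {g g' : Fin n → Fin n} (h : ∀ p ∈ occupied P, g p = g' p) :
    succVec P g = succVec P g' := by
  have : dotAct P g = dotAct P g' := by
    funext q
    ext x
    simp only [mem_dotAct]
    refine exists_congr fun p => ⟨fun ⟨hgp, hx⟩ => ⟨?_, hx⟩, fun ⟨hgp, hx⟩ => ⟨?_, hx⟩⟩
    · rwa [← h p (mem_filter.2 ⟨mem_univ p, x, hx⟩)]
    · rwa [h p (mem_filter.2 ⟨mem_univ p, x, hx⟩)]
  rw [succVec, this, succVec]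

theorem succSet_eq_image (P : Fin n → Finset ℕ) :
    succSet P = (mapsFixingOutside (occupied P)).image (succVec P) := by
  ext ρ
  simp only [mem_succSet, mem_image, mapsFixingOutside, mem_filter, mem_univ, true_and]
  refine ⟨fun ⟨g, hg⟩ => ?_, fun ⟨g, _, hg⟩ => ⟨g, hg⟩⟩
  refine ⟨fun p => if p ∈ occupied P then g p else p, fun p hp => if_neg hp, ?_⟩
  rw [← hg]
  exact succVec_congr fun p hp => if_pos hp

theorem succVec_injOn (h : IsEXP k P) :
    Set.InjOn (succVec P) (mapsFixingOutside (occupied P)) := by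
  intro g hg g' hg' hgg'
  funext p
  by_cases hp : p ∈ occupied P
  · obtain ⟨y, hy⟩ := (mem_filter.1 hp).2
    have h₁ : y + 2 ^ k ∈ succVec P g (g p) := (mem_succVec h).2 (Or.inr ⟨p, rfl, y, hy, rfl⟩)
    have h₂ : y + 2 ^ k ∈ succVec P g' (g' p) := (mem_succVec h).2 (Or.inr ⟨p, rfl, y, hy, rfl⟩)
    rw [hgg'] at h₁
    exact (h.succVec g').eq_of_mem h₁ h₂
  · rw [(mem_filter.1 hg).2 p hp, (mem_filter.1 hg').2 p hp]

def transferCount (S' S : Finset (Fin n)) : ℕ :=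
  ((mapsFixingOutside S').filter fun g => S' ∪ S'.image g = S).card

theorem card_filter_succSet (h : IsEXP k P) (S : Finset (Fin n)) :
    ((succSet P).filter (occupied · = S)).card = transferCount (occupied P) S := by
  rw [succSet_eq_image, filter_image, card_image_of_injOn
    ((succVec_injOn h).mono (coe_subset.2 (filter_subset _ _))), transferCount]
  simp only [occupied_succVec h]

theorem transferCount_eq_zero {S' S : Finset (Fin n)} (h : ¬S' ⊆ S) : transferCount S' S = 0 := by
  rw [transferCount, card_eq_zero, filter_eq_empty_iff]
  rintro g - rfl
  exact h subset_union_left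

theorem transferCount_self (S : Finset (Fin n)) : transferCount S S = S.card ^ S.card := by
  rw [transferCount, ← Fintype.card_coe S, ← Fintype.card_fun, ← card_univ]
  simp only [union_eq_left]
  refine card_bij' (fun g hg p => ⟨g p, (mem_filter.1 hg).2 (mem_image_of_mem g p.2)⟩)
    (fun f _ p => if hp : p ∈ S then f ⟨p, hp⟩ else p) (fun _ _ => mem_univ _) ?_ ?_ ?_
  · intro f _
    refine mem_filter.2 ⟨mem_filter.2 ⟨mem_univ _, fun p hp => dif_neg hp⟩, ?_⟩
    intro x hx
    obtain ⟨p, hp, rfl⟩ := mem_image.1 hx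
    simp [hp]
  · intro g hg
    funext p
    by_cases hp : p ∈ S
    · simp [hp]
    · rw [dif_neg hp, (mem_filter.1 (mem_filter.1 hg).1).2 p hp]
  · intro f _
    funext p
    simp

def rvalidCount (n : ℕ) (S : Finset (Fin n)) (k : ℕ) : ℕ :=
  ((rvalidFinset n k).filter (occupied · = S)).card

theorem rvalidCount_empty (hn : 1 ≤ n) (k : ℕ) : rvalidCount n ∅ k = 0 := by
  rw [rvalidCount, card_eq_zero, filter_eq_empty_iff]
  intro ρ hρ hocc
  have h0 : (⟨0, hn⟩ : Fin n) ∈ occupied ρ :=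
    mem_filter.2 ⟨mem_univ _, _, ((mem_rvalidFinset hn).1 hρ).2.1 ⟨0, hn⟩ rfl⟩
  simp [hocc] at h0

theorem rvalidCount_succ (hn : 1 ≤ n) (S : Finset (Fin n)) (k : ℕ) :
    rvalidCount n S (k + 1) = ∑ S' ∈ S.powerset, transferCount S' S * rvalidCount n S' k := by
  have hEXP : ∀ P ∈ rvalidFinset n k, IsEXP k P := fun P hP => ((mem_rvalidFinset hn).1 hP).1
  have hsucc : rvalidCount n S (k + 1) =
      ∑ P ∈ rvalidFinset n k, transferCount (occupied P) S := by
    rw [rvalidCount, rvalidFinset, filter_biUnion, card_biUnion fun P hP Q hQ hne =>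
      (succSet_disjoint (hEXP P hP) (hEXP Q hQ) hne).mono (filter_subset _ _) (filter_subset _ _)]
    exact sum_congr rfl fun P hP => card_filter_succSet (hEXP P hP) S
  rw [hsucc, ← sum_fiberwise_of_maps_to (g := occupied) (t := univ) fun _ _ => mem_univ _,
    ← sum_subset (subset_univ S.powerset) fun S' _ hS' => ?_]
  · refine sum_congr rfl fun S' _ => ?_
    rw [sum_congr rfl fun P hP => by rw [(mem_filter.1 hP).2], sum_const, smul_eq_mul,
      mul_comm, rvalidCount]
  · refine sum_eq_zero fun P hP => ?_
    rw [(mem_filter.1 hP).2]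
    exact transferCount_eq_zero (mt mem_powerset.2 hS')

end Counting

theorem ncard_isRvalid_eq_sum_rvalidCount {n : ℕ} (hn : 1 ≤ n) (k : ℕ) :
    {ρ : Fin n → Finset ℕ | IsRvalid k ρ}.ncard = ∑ S, rvalidCount n S k := by
  have : {ρ | IsRvalid k ρ} = (rvalidFinset n k : Set (Fin n → Finset ℕ)) :=
    Set.ext fun _ => (mem_rvalidFinset hn).symm
  rw [this, Set.ncard_coe_finset]
  exact card_eq_sum_card_fiberwise fun _ _ => mem_univ _

theorem isGeomComb_rvalidCount {n : ℕ} (hn : 1 ≤ n) (S : Finset (Fin n)) :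
    IsGeomComb (fun i : ℕ => ((i ^ i : ℕ) : ℚ)) (Icc 1 S.card)
      (fun k => (rvalidCount n S k : ℚ)) := by
  induction S using Finset.strongInduction with
  | H S ih =>
  rcases S.eq_empty_or_nonempty with rfl | hS
  · exact ⟨0, fun k => by simp [rvalidCount_empty hn]⟩
  have hIcc : Icc 1 S.card = insert S.card (Icc 1 (S.card - 1)) := by
    have := hS.card_pos
    ext i
    simp only [mem_insert, Finset.mem_Icc]
    omega
  rw [hIcc]
  refine IsGeomComb.of_rec (fun i hi => ?_)
    (d := fun k => ∑ S' ∈ S.ssubsets, (transferCount S' S : ℚ) * rvalidCount n S' k)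
    (IsGeomComb.sum _ fun S' hS' => ?_) fun k => ?_
  · have hi := Finset.mem_Icc.1 hi
    exact_mod_cast (Nat.pow_self_strictMonoOn (show i ≠ 0 by omega)
      (show S.card ≠ 0 by omega) (show i < S.card by omega)).ne
  · have hlt := card_lt_card (mem_ssubsets.1 hS')
    exact ((ih S' (mem_ssubsets.1 hS')).mono (Icc_subset_Icc_right (by omega))).const_mul _
  · rw [rvalidCount_succ hn, ← sum_erase_add _ _ (mem_powerset_self S), transferCount_self]
    push_cast
    rw [add_comm]
    rfl

theorem stmt14 (n : ℕ) (hn : 1 ≤ n) :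
    ∃ a : ℕ → ℚ, ∀ k : ℕ,
      ({ρ : Fin n → Finset ℕ | IsRvalid k ρ}.ncard : ℚ) =
        ∑ i ∈ Finset.Icc 1 n, a i * ((i ^ i : ℕ) : ℚ) ^ k := by
  have hle : ∀ S : Finset (Fin n), Icc 1 S.card ⊆ Icc 1 n := fun S =>
    Icc_subset_Icc_right ((card_le_univ S).trans_eq (Fintype.card_fin n))
  obtain ⟨a, ha⟩ := IsGeomComb.sum univ fun S _ => (isGeomComb_rvalidCount hn S).mono (hle S)
  exact ⟨a, fun k => by rw [ncard_isRvalid_eq_sum_rvalidCount hn, Nat.cast_sum]; exact ha k⟩
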